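/- The operator 𝓛_h v(z) = v(z) − ∫_{−π}^π ∑_{k≥2} v_k cos(k(z−ξ)) v(ξ) dξ, acting on the closed subspace X_h of continuous 2π-periodic even functions orthogonal to 1 and cos, is boundedly invertible provided |v_k| < 1/π for all k ≥ 2 and ∑_{k≥2}|v_k| < ∞. -/

import Mathlib

/-!
For even `g` the kernel `∑_{k≥2} v_k cos(k(z - ξ))` acts diagonally on the cosine coefficients
`ĝ_k = ∫_{-π}^{π} g(ξ) cos(kξ) dξ`: it sends `g` to the cosine series `∑_{k≥2} v_k ĝ_k cos(kz)`,
and by orthogonality the coefficients of a cosine series `∑ b_k cos(kz)` are `π b_k`.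
Hence `v = w + ∑_{k≥2} v_k / (1 - π v_k) ŵ_k cos(kz)` solves `𝓛_h v = w`, and since `v_k → 0`
the coefficients `v_k / (1 - π v_k)` are summable, which bounds `‖v‖_∞` by a multiple of `‖w‖_∞`.
Conversely, a solution `h` of `𝓛_h h = 0` is itself a cosine series with `ĥ_k = π v_k ĥ_k`,
so every `ĥ_k` vanishes and `h = 0`.
-/

open Real MeasureTheory intervalIntegral

/-- Membership in `X_h`: continuous, `2π`-periodic, even functions orthogonal to `1`
and `cos`. -/
def memXh (v : ℝ → ℝ) : Prop :=
  Continuous v ∧ Function.Periodic v (2 * π) ∧ (∀ z, v (-z) = v z) ∧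
  (∫ ξ in (-π)..π, v ξ) = 0 ∧ (∫ ξ in (-π)..π, v ξ * Real.cos ξ) = 0

open Filter Topology

noncomputable def cosCoeff (g : ℝ → ℝ) (k : ℕ) : ℝ := ∫ ξ in (-π)..π, g ξ * cos (k * ξ)

noncomputable def cosSeries (b : ℕ → ℝ) (z : ℝ) : ℝ := ∑' k, b k * cos (k * z)

noncomputable def cosKernelOp (b : ℕ → ℝ) (g : ℝ → ℝ) (z : ℝ) : ℝ :=
  ∫ ξ in (-π)..π, cosSeries b (z - ξ) * g ξ

theorem integral_eq_zero_of_odd {f : ℝ → ℝ} (hf : ∀ x, f (-x) = -f x) (a : ℝ) :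
    ∫ x in (-a)..a, f x = 0 := by
  have h : ∫ x in (-a)..a, f x = -∫ x in (-a)..a, f x :=
    calc ∫ x in (-a)..a, f x = ∫ x in (-a)..a, f (-x) := by rw [integral_comp_neg, neg_neg]
      _ = -∫ x in (-a)..a, f x := by simp only [hf, intervalIntegral.integral_neg]
  linarith

theorem integral_cos_int_mul {m : ℤ} (hm : m ≠ 0) : ∫ ξ in (-π)..π, cos (m * ξ) = 0 := by
  rw [integral_comp_mul_left cos (Int.cast_ne_zero.2 hm), integral_cos, mul_neg,
    sin_neg, sin_int_mul_pi, neg_zero, sub_zero, smul_zero]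

theorem integral_cos_nat_mul_mul_cos {k : ℕ} (hk : k ≠ 0) (j : ℕ) :
    ∫ ξ in (-π)..π, cos (k * ξ) * cos (j * ξ) = if k = j then π else 0 := by
  have hprod : ∀ ξ : ℝ, cos (k * ξ) * cos (j * ξ) =
      cos (((k - j : ℤ) : ℝ) * ξ) / 2 + cos (((k + j : ℤ) : ℝ) * ξ) / 2 := by
    intro ξ
    push_cast
    rw [sub_mul, add_mul, cos_sub, cos_add]
    ring
  simp_rw [hprod]
  rw [integral_add (Continuous.intervalIntegrable (by fun_prop) _ _)
      (Continuous.intervalIntegrable (by fun_prop) _ _),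
    intervalIntegral.integral_div, intervalIntegral.integral_div,
    integral_cos_int_mul (by omega : (k + j : ℤ) ≠ 0)]
  split_ifs with hkj
  · simp [hkj]
  · rw [integral_cos_int_mul (by omega : (k - j : ℤ) ≠ 0)]
    simp

theorem abs_mul_cos_le (b x : ℝ) : |b * cos x| ≤ |b| := by
  rw [abs_mul]
  exact mul_le_of_le_one_right (abs_nonneg b) (abs_cos_le_one x)

theorem abs_mul_cos_mul_le (b x y : ℝ) : |b * cos x * y| ≤ |b| * |y| := by
  rw [abs_mul]
  exact mul_le_mul_of_nonneg_right (abs_mul_cos_le b x) (abs_nonneg y)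

theorem intervalIntegral_tsum_of_abs_le {F : ℕ → ℝ → ℝ} {c : ℕ → ℝ} {G : ℝ → ℝ} {a b : ℝ}
    (hF : ∀ k, Continuous (F k)) (hc : Summable c) (hG : Continuous G)
    (hbound : ∀ k x, |F k x| ≤ c k * G x) :
    ∫ x in a..b, ∑' k, F k x = ∑' k, ∫ x in a..b, F k x := by
  have hsum : ∀ x, Summable fun k => F k x := fun x =>
    (hc.mul_right (G x)).of_norm_bounded fun k => hbound k x
  refine (hasSum_integral_of_dominated_convergence (fun k x => c k * G x)
    (fun k => (hF k).aestronglyMeasurable) (fun k => ae_of_all _ fun x _ => hbound k x)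
    (ae_of_all _ fun x _ => hc.mul_right (G x)) ?_
    (ae_of_all _ fun x _ => (hsum x).hasSum)).tsum_eq.symm
  simp_rw [tsum_mul_right]
  exact (continuous_const.mul hG).intervalIntegrable _ _

section CosCoeff

variable {g : ℝ → ℝ}

theorem cosCoeff_zero (g : ℝ → ℝ) : cosCoeff g 0 = ∫ ξ in (-π)..π, g ξ := by
  simp [cosCoeff]

theorem cosCoeff_one (g : ℝ → ℝ) : cosCoeff g 1 = ∫ ξ in (-π)..π, g ξ * cos ξ := by
  simp [cosCoeff]

theorem cosCoeff_add {f : ℝ → ℝ} (hf : Continuous f) (hg : Continuous g) (k : ℕ) :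
    cosCoeff (f + g) k = cosCoeff f k + cosCoeff g k := by
  simp only [cosCoeff, Pi.add_apply, add_mul]
  exact integral_add (Continuous.intervalIntegrable (by fun_prop) _ _)
    (Continuous.intervalIntegrable (by fun_prop) _ _)

theorem abs_cosCoeff_le {M : ℝ} (hM : ∀ x, |g x| ≤ M) (k : ℕ) :
    |cosCoeff g k| ≤ 2 * π * M := by
  have hpoint (x : ℝ) : ‖g x * cos (k * x)‖ ≤ M := by
    rw [Real.norm_eq_abs, abs_mul]
    exact (mul_le_of_le_one_right (abs_nonneg _) (abs_cos_le_one _)).trans (hM x)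
  calc |cosCoeff g k| ≤ M * |π - -π| :=
        intervalIntegral.norm_integral_le_of_norm_le_const fun x _ => hpoint x
    _ = 2 * π * M := by rw [abs_of_nonneg (by linarith [pi_pos])]; ring

theorem abs_mul_cosCoeff_le {M : ℝ} (hM : ∀ x, |g x| ≤ M) (b : ℝ) (k : ℕ) :
    |b * cosCoeff g k| ≤ |b| * (2 * π * M) := by
  rw [abs_mul]
  exact mul_le_mul_of_nonneg_left (abs_cosCoeff_le hM k) (abs_nonneg b)

theorem summable_abs_mul_cosCoeff {b : ℕ → ℝ} (hb : Summable fun k => |b k|) {M : ℝ}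
    (hM : ∀ x, |g x| ≤ M) : Summable fun k => |b k * cosCoeff g k| :=
  (hb.mul_right _).of_nonneg_of_le (fun _ => abs_nonneg _) fun k =>
    abs_mul_cosCoeff_le hM (b k) k

end CosCoeff

section CosSeries

variable {b : ℕ → ℝ}

theorem summable_mul_cos (hb : Summable fun k => |b k|) (z : ℝ) :
    Summable fun k => b k * cos (k * z) :=
  hb.of_norm_bounded fun _ => abs_mul_cos_le _ _

theorem continuous_cosSeries (hb : Summable fun k => |b k|) : Continuous (cosSeries b) :=
  continuous_tsum (fun _ => by fun_prop) hb fun _ _ => abs_mul_cos_le _ _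

theorem cosSeries_neg (b : ℕ → ℝ) (z : ℝ) : cosSeries b (-z) = cosSeries b z := by
  simp only [cosSeries, mul_neg, cos_neg]

theorem cosSeries_periodic (b : ℕ → ℝ) : Function.Periodic (cosSeries b) (2 * π) := by
  intro z
  simp only [cosSeries, mul_add, cos_add_nat_mul_two_pi]

theorem abs_cosSeries_le (hb : Summable fun k => |b k|) (z : ℝ) :
    |cosSeries b z| ≤ ∑' k, |b k| :=
  (norm_tsum_le_tsum_norm (summable_mul_cos hb z).norm).trans
    ((summable_mul_cos hb z).norm.tsum_le_tsum (fun _ => abs_mul_cos_le _ _) hb)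

theorem cosCoeff_cosSeries (hb : Summable fun k => |b k|) (hb0 : b 0 = 0) (j : ℕ) :
    cosCoeff (cosSeries b) j = π * b j := by
  have hterm : ∀ k : ℕ, ∫ ξ in (-π)..π, b k * cos (k * ξ) * cos (j * ξ) =
      if k = j then π * b j else 0 := by
    intro k
    rcases eq_or_ne k 0 with rfl | hk
    · split_ifs with h
      · subst h; simp [hb0]
      · simp [hb0]
    · simp_rw [mul_assoc, intervalIntegral.integral_const_mul, integral_cos_nat_mul_mul_cos hk]
      split_ifs with h <;> simp [h, mul_comm]
  calc cosCoeff (cosSeries b) j = ∫ ξ in (-π)..π, ∑' k, b k * cos (k * ξ) * cos (j * ξ) := by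
        simp only [cosCoeff, cosSeries, tsum_mul_right]
    _ = ∑' k, ∫ ξ in (-π)..π, b k * cos (k * ξ) * cos (j * ξ) :=
        intervalIntegral_tsum_of_abs_le (fun k => by fun_prop) hb (by fun_prop)
          fun k ξ => abs_mul_cos_mul_le _ _ _
    _ = π * b j := by simp only [hterm, tsum_ite_eq]

theorem cosKernelOp_eq_cosSeries (hb : Summable fun k => |b k|) {g : ℝ → ℝ} (hg : Continuous g)
    (hge : ∀ x, g (-x) = g x) : cosKernelOp b g = cosSeries fun k => b k * cosCoeff g k := by
  funext z
  have hsin (k : ℕ) : ∫ ξ in (-π)..π, g ξ * sin (k * ξ) = 0 :=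
    integral_eq_zero_of_odd (fun x => by rw [hge, mul_neg, sin_neg, mul_neg]) π
  have hterm (k : ℕ) : ∫ ξ in (-π)..π, b k * cos (k * (z - ξ)) * g ξ =
      b k * cosCoeff g k * cos (k * z) :=
    calc ∫ ξ in (-π)..π, b k * cos (k * (z - ξ)) * g ξ
        = ∫ ξ in (-π)..π, b k * cos (k * z) * (g ξ * cos (k * ξ)) +
            b k * sin (k * z) * (g ξ * sin (k * ξ)) := by
          congr 1; funext ξ; rw [mul_sub, cos_sub]; ring
      _ = b k * cosCoeff g k * cos (k * z) := by
          rw [integral_add (Continuous.intervalIntegrable (by fun_prop) _ _)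
            (Continuous.intervalIntegrable (by fun_prop) _ _),
            intervalIntegral.integral_const_mul, intervalIntegral.integral_const_mul, hsin,
            cosCoeff]
          ring
  calc cosKernelOp b g z = ∫ ξ in (-π)..π, ∑' k, b k * cos (k * (z - ξ)) * g ξ := by
        simp only [cosKernelOp, cosSeries, tsum_mul_right]
    _ = ∑' k, ∫ ξ in (-π)..π, b k * cos (k * (z - ξ)) * g ξ :=
        intervalIntegral_tsum_of_abs_le (fun k => by fun_prop) hb (by fun_prop)
          fun k ξ => abs_mul_cos_mul_le _ _ _
    _ = _ := by simp only [hterm, cosSeries]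

theorem cosKernelOp_sub (hb : Summable fun k => |b k|) {f g : ℝ → ℝ} (hf : Continuous f)
    (hg : Continuous g) (z : ℝ) :
    cosKernelOp b (f - g) z = cosKernelOp b f z - cosKernelOp b g z := by
  have := continuous_cosSeries hb
  simp only [cosKernelOp, Pi.sub_apply, mul_sub]
  exact integral_sub (Continuous.intervalIntegrable (by fun_prop) _ _)
    (Continuous.intervalIntegrable (by fun_prop) _ _)

end CosSeries

theorem summable_abs_div_one_sub_mul {a : ℕ → ℝ} (ha : Summable fun k => |a k|) (c : ℝ) :
    Summable fun k => |a k / (1 - c * a k)| := by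
  have hlim : Tendsto (fun k => 1 - c * a k) atTop (𝓝 1) := by
    simpa using (ha.of_abs.tendsto_atTop_zero.const_mul c).const_sub 1
  refine (ha.mul_left 2).of_norm_bounded_eventually_nat ?_
  filter_upwards [hlim.eventually (lt_mem_nhds one_half_lt_one)] with k hk
  rw [Real.norm_eq_abs, abs_abs, abs_div, abs_of_pos (by linarith : 0 < 1 - c * a k),
    div_le_iff₀ (by linarith)]
  nlinarith [abs_nonneg (a k)]

theorem memXh.abs_le_iSup {v : ℝ → ℝ} (hv : memXh v) (x : ℝ) : |v x| ≤ ⨆ z, |v z| := by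
  obtain ⟨M, hM⟩ := (hv.2.1.isBounded_of_continuous two_pi_pos.ne' hv.1).exists_norm_le
  exact le_ciSup ⟨M, by rintro _ ⟨z, rfl⟩; exact hM _ ⟨z, rfl⟩⟩ x

section Resolvent

variable {a : ℕ → ℝ} {w : ℝ → ℝ}

noncomputable def cosResolvent (a : ℕ → ℝ) (w : ℝ → ℝ) : ℝ → ℝ :=
  w + cosSeries fun k => a k / (1 - π * a k) * cosCoeff w k

theorem summable_abs_cosResolvent_coeff (ha : Summable fun k => |a k|) (hw : memXh w) :
    Summable fun k => |a k / (1 - π * a k) * cosCoeff w k| :=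
  summable_abs_mul_cosCoeff (summable_abs_div_one_sub_mul ha π) hw.abs_le_iSup

theorem cosCoeff_cosResolvent (ha : Summable fun k => |a k|) (ha0 : a 0 = 0)
    (hπa : ∀ k, π * a k ≠ 1) (hw : memXh w) (k : ℕ) :
    cosCoeff (cosResolvent a w) k = cosCoeff w k / (1 - π * a k) := by
  have hsum := summable_abs_cosResolvent_coeff ha hw
  rw [cosResolvent, cosCoeff_add hw.1 (continuous_cosSeries hsum),
    cosCoeff_cosSeries hsum (by simp [ha0])]
  have : 1 - π * a k ≠ 0 := sub_ne_zero.2 (hπa k).symm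
  field_simp
  ring

theorem cosResolvent_memXh (ha : Summable fun k => |a k|) (ha0 : a 0 = 0)
    (hπa : ∀ k, π * a k ≠ 1) (hw : memXh w) : memXh (cosResolvent a w) := by
  have hcoeff := cosCoeff_cosResolvent ha ha0 hπa hw
  refine ⟨hw.1.add (continuous_cosSeries (summable_abs_cosResolvent_coeff ha hw)),
    hw.2.1.add (cosSeries_periodic _), fun z => by simp [cosResolvent, hw.2.2.1 z, cosSeries_neg],
    ?_, ?_⟩
  · rw [← cosCoeff_zero, hcoeff, cosCoeff_zero, hw.2.2.2.1, zero_div]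
  · rw [← cosCoeff_one, hcoeff, cosCoeff_one, hw.2.2.2.2, zero_div]

theorem cosResolvent_sub_cosKernelOp (ha : Summable fun k => |a k|) (ha0 : a 0 = 0)
    (hπa : ∀ k, π * a k ≠ 1) (hw : memXh w) (z : ℝ) :
    cosResolvent a w z - cosKernelOp a (cosResolvent a w) z = w z := by
  have hv := cosResolvent_memXh ha ha0 hπa hw
  have hcoeff : (fun k => a k * cosCoeff (cosResolvent a w) k) =
      fun k => a k / (1 - π * a k) * cosCoeff w k := by
    funext k
    rw [cosCoeff_cosResolvent ha ha0 hπa hw]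
    ring
  rw [cosKernelOp_eq_cosSeries ha hv.1 hv.2.2.1, hcoeff, cosResolvent, Pi.add_apply]
  ring

theorem abs_cosResolvent_le (ha : Summable fun k => |a k|) (hw : memXh w) (z : ℝ) :
    |cosResolvent a w z| ≤ (1 + 2 * π * ∑' k, |a k / (1 - π * a k)|) * ⨆ x, |w x| := by
  have hM := hw.abs_le_iSup
  have hu := summable_abs_div_one_sub_mul ha π
  calc |cosResolvent a w z|
      ≤ |w z| + ∑' k, |a k / (1 - π * a k) * cosCoeff w k| :=
        (abs_add_le _ _).trans (add_le_add le_rfl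
          (abs_cosSeries_le (summable_abs_cosResolvent_coeff ha hw) z))
    _ ≤ (⨆ x, |w x|) + ∑' k, |a k / (1 - π * a k)| * (2 * π * ⨆ x, |w x|) :=
        add_le_add (hM z) ((summable_abs_cosResolvent_coeff ha hw).tsum_le_tsum
          (fun k => abs_mul_cosCoeff_le hM _ k) (hu.mul_right _))
    _ = _ := by rw [tsum_mul_right]; ring

end Resolvent

theorem eq_zero_of_cosKernelOp_eq_self {a : ℕ → ℝ} (ha : Summable fun k => |a k|)
    (ha0 : a 0 = 0) (hπa : ∀ k, π * a k ≠ 1) {h : ℝ → ℝ} (hc : Continuous h)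
    (he : ∀ x, h (-x) = h x) {M : ℝ} (hM : ∀ x, |h x| ≤ M) (hfix : cosKernelOp a h = h) :
    h = 0 := by
  have hser : h = cosSeries fun k => a k * cosCoeff h k :=
    hfix.symm.trans (cosKernelOp_eq_cosSeries ha hc he)
  have hcoeff (k : ℕ) : cosCoeff h k = 0 := by
    have hk := cosCoeff_cosSeries (summable_abs_mul_cosCoeff ha hM) (by simp [ha0]) k
    rw [← hser] at hk
    have : (1 - π * a k) * cosCoeff h k = 0 := by linear_combination hk
    exact (mul_eq_zero.1 this).resolve_left (sub_ne_zero.2 (hπa k).symm)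
  rw [hser]
  funext z
  simp [cosSeries, hcoeff]

theorem existsUnique_sub_cosKernelOp_eq {a : ℕ → ℝ} (ha : Summable fun k => |a k|)
    (ha0 : a 0 = 0) (hπa : ∀ k, π * a k ≠ 1) :
    ∃ C > (0 : ℝ), ∀ w : ℝ → ℝ, memXh w →
      ∃! v : ℝ → ℝ, memXh v ∧ (∀ z, v z - cosKernelOp a v z = w z) ∧
        (⨆ z, |v z|) ≤ C * ⨆ z, |w z| := by
  have hu : 0 ≤ ∑' k, |a k / (1 - π * a k)| := tsum_nonneg fun _ => abs_nonneg _
  refine ⟨1 + 2 * π * ∑' k, |a k / (1 - π * a k)|, by positivity, fun w hw =>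
    ⟨cosResolvent a w, ⟨cosResolvent_memXh ha ha0 hπa hw,
      cosResolvent_sub_cosKernelOp ha ha0 hπa hw, ciSup_le (abs_cosResolvent_le ha hw)⟩, ?_⟩⟩
  rintro v ⟨hv, hvw, -⟩
  have hres := cosResolvent_memXh ha ha0 hπa hw
  have hfix : cosKernelOp a (v - cosResolvent a w) = v - cosResolvent a w := by
    funext z
    rw [cosKernelOp_sub ha hv.1 hres.1, Pi.sub_apply]
    linarith [hvw z, cosResolvent_sub_cosKernelOp ha ha0 hπa hw z]
  have hbound (x : ℝ) : |(v - cosResolvent a w) x| ≤ (⨆ z, |v z|) + ⨆ z, |cosResolvent a w z| :=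
    (abs_sub _ _).trans (add_le_add (hv.abs_le_iSup x) (hres.abs_le_iSup x))
  exact sub_eq_zero.1 (eq_zero_of_cosKernelOp_eq_self ha ha0 hπa (hv.1.sub hres.1)
    (fun x => by simp [hv.2.2.1 x, hres.2.2.1 x]) hbound hfix)

/-- The operator `𝓛_h v(z) = v(z) − ∫_{−π}^{π} ∑_{k≥2} v_k cos(k(z−ξ)) v(ξ) dξ` on `X_h`
is boundedly invertible provided `|v_k| < 1/π` for `k ≥ 2` and `∑ |v_k| < ∞`: for every
`w ∈ X_h` there is a unique `v ∈ X_h` with `𝓛_h v = w`, and `‖v‖_∞ ≤ C ‖w‖_∞` with a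
constant `C` independent of `w`. -/
theorem Lh_boundedly_invertible (vk : ℕ → ℝ)
    (hvk : ∀ k, 2 ≤ k → |vk k| < 1 / π)
    (hsum : Summable fun k : ℕ => |vk k|) :
    ∃ C > (0:ℝ), ∀ w : ℝ → ℝ, memXh w →
      ∃! v : ℝ → ℝ, memXh v ∧
        (∀ z : ℝ, v z - (∫ ξ in (-π)..π,
            (∑' k : ℕ, if 2 ≤ k then vk k * Real.cos (k * (z - ξ)) else 0) * v ξ) = w z) ∧
        (⨆ z : ℝ, |v z|) ≤ C * (⨆ z : ℝ, |w z|) := by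
  set a : ℕ → ℝ := fun k => if 2 ≤ k then vk k else 0
  have ha : Summable fun k => |a k| :=
    hsum.of_nonneg_of_le (fun _ => abs_nonneg _) fun k => by
      by_cases hk : 2 ≤ k <;> simp [a, hk]
  have hπa (k : ℕ) : π * a k ≠ 1 := by
    by_cases hk : 2 ≤ k
    · have := (lt_div_iff₀' pi_pos).1 (hvk k hk)
      simp only [a, if_pos hk]
      exact ((mul_le_mul_of_nonneg_left (le_abs_self _) pi_pos.le).trans_lt this).ne
    · simp [a, hk]
  have hkernel (v : ℝ → ℝ) (z : ℝ) : (∫ ξ in (-π)..π,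
      (∑' k : ℕ, if 2 ≤ k then vk k * Real.cos (k * (z - ξ)) else 0) * v ξ) =
      cosKernelOp a v z := by
    simp only [cosKernelOp, cosSeries, a, ite_zero_mul]
  simpa only [hkernel] using existsUnique_sub_cosKernelOp_eq ha (by simp [a]) hπa
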